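/- Let G be a graph with n − 1 ≥ 2 vertices. Then N(P_{(Ĝ)^}) = N(P_{Ĝ}) + 2^n, where Ĝ is the suspension of G and (Ĝ)^ is the suspension of Ĝ. -/

import Mathlib

open Finset

/-- The symmetric edge polytope of a finite simple graph `G`: the convex hull of the
vectors `e_i - e_j` for all adjacent pairs `i, j`. -/
def symEdgePolytope {V : Type*} [DecidableEq V] (G : SimpleGraph V) : Set (V → ℝ) :=
  convexHull ℝ {x : V → ℝ | ∃ i j : V, G.Adj i j ∧
    x = fun k => (if k = i then (1 : ℝ) else 0) - (if k = j then (1 : ℝ) else 0)}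

/-- A facet of a polytope `P`: a maximal proper (exposed) face of `P`. -/
def IsFacet {V : Type*} (P F : Set (V → ℝ)) : Prop :=
  IsExposed ℝ P F ∧ F ≠ P ∧
    ∀ F' : Set (V → ℝ), IsExposed ℝ P F' → F' ≠ P → F ⊆ F' → F' = F

/-- `N(P)`: the number of facets of a polytope `P`. -/
noncomputable def numFacets {V : Type*} (P : Set (V → ℝ)) : ℕ :=
  Set.ncard {F : Set (V → ℝ) | IsFacet P F}

/-- The suspension `Ĝ` of a graph `G`: a new apex vertex (`none`) is joined to all
vertices of `G`. -/
def suspension {V : Type*} (G : SimpleGraph V) : SimpleGraph (Option V) where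
  Adj x y :=
    match x, y with
    | some a, some b => G.Adj a b
    | some _, none => True
    | none, some _ => True
    | none, none => False
  symm := by
    constructor
    rintro (_ | a) (_ | b) h
    · exact h
    · trivial
    · trivial
    · exact h.symm
  loopless := by
    constructor
    rintro (_ | a) h
    · exact h
    · exact G.loopless.irrefl a h

/-!
Every facet of `P_Ĥ` is cut out by an integer functional `f` with `f (apex) = 0` and
`f i - f j ≤ 1` on the edges of `Ĥ` whose tight edges (`f i - f j = 1`) form a connected spanning
subgraph; this `f` is unique and takes values in `{-1, 0, 1}`. To find it for a facet maximising
`g` with value `M > 0`, round `i ↦ ⌈g (eᵢ) / M⌉` (the ceiling is monotone and commutes with `+ 1`,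
so edge differences stay `≤ 1` and tight edges stay tight), then raise to `1` every zero whose
neighbours are all zero; the face of the result contains the facet, hence equals it.

For `H = Ĝ`, a normal vanishing at the apex of `Ĝ` is exactly a normal for `G`, while a normal
with value `c = ±1` there may take arbitrary values in `{0, c}` on the vertices of `G`: these are
the extra `2 · 2 ^ |V|` facets.
-/

section ExposedFaces

variable {E : Type*} [NormedAddCommGroup E] [NormedSpace ℝ E]

theorem IsExposed.eq_convexHull_inter {S F : Set E} (hS : S.Finite)
    (hF : IsExposed ℝ (convexHull ℝ S) F) : F = convexHull ℝ (S ∩ F) := by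
  have hcompact : IsCompact F := hF.isCompact (hS.isCompact_convexHull ℝ)
  have hconvex : Convex ℝ F := hF.convex (convex_convexHull ℝ S)
  refine subset_antisymm ?_ (convexHull_min Set.inter_subset_right hconvex)
  have hext : F.extremePoints ℝ ⊆ S ∩ F := fun x hx =>
    ⟨extremePoints_convexHull_subset (hF.isExtreme.extremePoints_subset_extremePoints hx), hx.1⟩
  calc F = closure (convexHull ℝ (F.extremePoints ℝ)) :=
        (closure_convexHull_extremePoints hcompact hconvex).symm
    _ ⊆ closure (convexHull ℝ (S ∩ F)) := closure_mono (convexHull_mono hext)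
    _ = convexHull ℝ (S ∩ F) := ((hS.inter_of_left F).isCompact_convexHull ℝ).isClosed.closure_eq

variable {A : Set E} {l : StrongDual ℝ E} {x y : E}

theorem ContinuousLinearMap.apply_eq_of_mem_toExposed (hx : x ∈ l.toExposed A)
    (hy : y ∈ l.toExposed A) : l x = l y :=
  le_antisymm (hy.2 x hx.1) (hx.2 y hy.1)

theorem ContinuousLinearMap.toExposed_eq_of_le {M : ℝ} (hle : ∀ y ∈ A, l y ≤ M) (hx : x ∈ A)
    (hxM : l x = M) : l.toExposed A = {y ∈ A | l y = M} := by
  ext y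
  exact ⟨fun hy => ⟨hy.1, le_antisymm (hle y hy.1) (hxM ▸ hy.2 x hx)⟩,
    fun hy => ⟨hy.1, fun z hz => hy.2 ▸ hle z hz⟩⟩

theorem ContinuousLinearMap.pos_of_mem_toExposed (hA : ∀ y ∈ A, -y ∈ A)
    (hx : x ∈ l.toExposed A) (hne : l.toExposed A ≠ A) : 0 < l x := by
  have hnonneg : 0 ≤ l x := by
    have := hx.2 (-x) (hA x hx.1)
    rw [map_neg] at this
    linarith
  refine hnonneg.lt_of_ne fun hzero => hne ?_
  refine subset_antisymm (Set.sep_subset _ _) fun y hy => ⟨hy, fun z hz => ?_⟩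
  have h₁ := hx.2 y hy
  have h₂ := hx.2 (-y) (hA y hy)
  have h₃ := hx.2 z hz
  rw [map_neg] at h₂
  linarith

end ExposedFaces

section DotProduct

variable {ι : Type*} [Fintype ι]

noncomputable def dotCLM (f : ι → ℝ) : StrongDual ℝ (ι → ℝ) :=
  LinearMap.toContinuousLinearMap (Fintype.linearCombination ℝ f)

theorem dotCLM_apply (f x : ι → ℝ) : dotCLM f x = ∑ i, x i * f i := by
  simp [dotCLM, Fintype.linearCombination_apply]

variable [DecidableEq ι]

theorem dotCLM_single_sub_single (f : ι → ℝ) (i j : ι) :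
    dotCLM f (Pi.single i 1 - Pi.single j 1) = f i - f j := by
  simp [dotCLM_apply, sub_mul, Finset.sum_sub_distrib, Pi.single_apply]

theorem StrongDual.apply_eq_sum_mul_apply_single (g : StrongDual ℝ (ι → ℝ)) (x : ι → ℝ) :
    g x = ∑ i, x i * g (Pi.single i 1) := by
  conv_lhs => rw [pi_eq_sum_univ' x]
  simp [map_sum]

end DotProduct

section SymEdgePolytope

variable {ι : Type*} [DecidableEq ι]

def edgeVectors (G : SimpleGraph ι) : Set (ι → ℝ) :=
  {x | ∃ i j, G.Adj i j ∧ x = Pi.single i 1 - Pi.single j 1}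

variable {G : SimpleGraph ι}

theorem symEdgePolytope_eq_convexHull (G : SimpleGraph ι) :
    symEdgePolytope G = convexHull ℝ (edgeVectors G) := by
  have hsingle (i j : ι) : (Pi.single i 1 - Pi.single j 1 : ι → ℝ) =
      fun k => (if k = i then (1 : ℝ) else 0) - (if k = j then (1 : ℝ) else 0) := by
    ext k
    simp [Pi.single_apply]
  simp only [symEdgePolytope, edgeVectors, hsingle]

theorem single_sub_single_mem_symEdgePolytope {i j : ι} (hij : G.Adj i j) :
    Pi.single i 1 - Pi.single j 1 ∈ symEdgePolytope G :=
  (symEdgePolytope_eq_convexHull G) ▸ subset_convexHull ℝ _ ⟨i, j, hij, rfl⟩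

theorem neg_mem_symEdgePolytope {x : ι → ℝ} (hx : x ∈ symEdgePolytope G) :
    -x ∈ symEdgePolytope G := by
  have hneg : -edgeVectors G ⊆ edgeVectors G := by
    rintro _ ⟨i, j, hij, hx⟩
    exact ⟨j, i, hij.symm, by rw [neg_eq_iff_eq_neg.1 hx, neg_sub]⟩
  rw [symEdgePolytope_eq_convexHull] at hx ⊢
  exact convexHull_mono hneg (convexHull_neg (𝕜 := ℝ) (edgeVectors G) ▸ Set.neg_mem_neg.2 hx)

theorem apply_le_of_mem_symEdgePolytope {l : StrongDual ℝ (ι → ℝ)} {M : ℝ}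
    (hl : ∀ i j, G.Adj i j → l (Pi.single i 1 - Pi.single j 1) ≤ M) {x : ι → ℝ}
    (hx : x ∈ symEdgePolytope G) : l x ≤ M := by
  refine convexHull_min ?_ (convex_halfSpace_le l.isLinear M)
    ((symEdgePolytope_eq_convexHull G) ▸ hx)
  rintro _ ⟨i, j, hij, rfl⟩
  exact hl i j hij

variable [Fintype ι]

theorem edgeVectors_finite (G : SimpleGraph ι) : (edgeVectors G).Finite :=
  (Set.finite_range fun p : ι × ι => (Pi.single p.1 1 - Pi.single p.2 1 : ι → ℝ)).subset
    fun _ ⟨i, j, _, hx⟩ => ⟨(i, j), hx.symm⟩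

theorem sum_eq_zero_of_mem_symEdgePolytope {x : ι → ℝ} (hx : x ∈ symEdgePolytope G) :
    ∑ i, x i = 0 := by
  have hconvex : Convex ℝ {x : ι → ℝ | ∑ i, x i = 0} :=
    convex_hyperplane ⟨fun x y => Finset.sum_add_distrib, fun c x => by simp [Finset.mul_sum]⟩ 0
  refine convexHull_min ?_ hconvex ((symEdgePolytope_eq_convexHull G) ▸ hx)
  rintro _ ⟨i, j, -, rfl⟩
  simp [Finset.sum_sub_distrib]

theorem toExposed_symEdgePolytope_eq_of_apply_single {g : StrongDual ℝ (ι → ℝ)} {f : ι → ℝ}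
    {M c : ℝ} (hM : 0 < M) (hg : ∀ i, g (Pi.single i 1) = M * f i + c) :
    g.toExposed (symEdgePolytope G) = (dotCLM f).toExposed (symEdgePolytope G) := by
  have hscale : ∀ x ∈ symEdgePolytope G, g x = M * dotCLM f x := fun x hx =>
    calc g x = ∑ i, x i * (M * f i + c) := by
          rw [g.apply_eq_sum_mul_apply_single]
          simp only [hg]
      _ = M * ∑ i, x i * f i + c * ∑ i, x i := by
          rw [Finset.mul_sum, Finset.mul_sum, ← Finset.sum_add_distrib]
          exact Finset.sum_congr rfl fun i _ => by ring
      _ = M * dotCLM f x := by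
          rw [sum_eq_zero_of_mem_symEdgePolytope hx, dotCLM_apply, mul_zero, add_zero]
  ext x
  refine and_congr_right fun hx => forall₂_congr fun y hy => ?_
  rw [hscale x hx, hscale y hy, mul_le_mul_iff_right₀ hM]

end SymEdgePolytope

section SuspensionFacets

variable {W : Type*} {H : SimpleGraph W}

structure IsSupportingNormal (H : SimpleGraph W) (f : Option W → ℤ) : Prop where
  apex : f none = 0
  sub_le_one : ∀ ⦃i j⦄, (suspension H).Adj i j → f i - f j ≤ 1

/-- With the apex normalised to `0`, these are the integer normals of the facets of `P_Ĥ`: the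
tight edges (`f i - f j = 1`) of `Ĥ` must form a connected spanning subgraph, i.e. every vertex
with `f = 0` has a neighbour with `f = ±1`, which is joined to the apex by a tight edge. -/
structure IsFacetNormal (H : SimpleGraph W) (f : Option W → ℤ) : Prop
    extends IsSupportingNormal H f where
  exists_adj_ne_zero : ∀ v, f (some v) = 0 → ∃ u, H.Adj u v ∧ f (some u) ≠ 0
  exists_ne_zero : ∃ v, f (some v) ≠ 0

variable {f : Option W → ℤ}

theorem IsSupportingNormal.neg_one_le (hf : IsSupportingNormal H f) (i : Option W) : -1 ≤ f i := by
  rcases i with _ | v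
  · simp [hf.apex]
  · have := hf.sub_le_one (i := none) (j := some v) trivial
    rw [hf.apex] at this
    omega

theorem IsSupportingNormal.le_one (hf : IsSupportingNormal H f) (i : Option W) : f i ≤ 1 := by
  rcases i with _ | v
  · simp [hf.apex]
  · have := hf.sub_le_one (i := some v) (j := none) trivial
    rw [hf.apex] at this
    omega

theorem setOf_isFacetNormal_finite [Finite W] (H : SimpleGraph W) :
    {f : Option W → ℤ | IsFacetNormal H f}.Finite :=
  (Set.Finite.pi fun _ => Set.finite_Icc (-1 : ℤ) 1).subset
    fun _ hf i _ => ⟨hf.neg_one_le i, hf.le_one i⟩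

theorem IsFacetNormal.exists_adj_sub_eq_one (hf : IsFacetNormal H f) :
    ∃ i j, (suspension H).Adj i j ∧ f i - f j = 1 := by
  obtain ⟨v, hv⟩ := hf.exists_ne_zero
  have := hf.neg_one_le (some v)
  have := hf.le_one (some v)
  rcases (by omega : f (some v) = 1 ∨ f (some v) = -1) with h | h
  · exact ⟨some v, none, trivial, by rw [h, hf.apex]; rfl⟩
  · exact ⟨none, some v, trivial, by rw [h, hf.apex]; rfl⟩

theorem isFacetNormal_const_one [Nonempty W] : IsFacetNormal H fun i => i.elim 0 fun _ => 1 where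
  apex := rfl
  sub_le_one := by
    rintro (_ | u) (_ | v) _ <;> simp
  exists_adj_ne_zero _ h := absurd h one_ne_zero
  exists_ne_zero := ⟨Classical.arbitrary W, one_ne_zero⟩

theorem IsSupportingNormal.exists_isFacetNormal [Nonempty W] (hf : IsSupportingNormal H f) :
    ∃ f', IsFacetNormal H f' ∧
      ∀ i j, (suspension H).Adj i j → f i - f j = 1 → f' i - f' j = 1 := by
  classical
  let Lonely (v : W) : Prop := f (some v) = 0 ∧ ∀ u, H.Adj u v → f (some u) = 0
  -- raising a vertex whose whole closed neighbourhood sits at level `0` creates tight edges to the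
  -- apex and to its neighbours, and destroys no tight edge of `f`
  let f' (i : Option W) : ℤ := i.elim 0 fun v => if Lonely v then 1 else f (some v)
  have hraise : ∀ i, f' i = f i ∨ f i = 0 ∧ f' i = 1 := by
    rintro (_ | v)
    · exact Or.inl hf.apex.symm
    · by_cases hv : Lonely v
      · exact Or.inr ⟨hv.1, if_pos hv⟩
      · exact Or.inl (if_neg hv)
  have hkeep : ∀ i j, (suspension H).Adj i j → f i ≠ f j → f' i = f i := by
    rintro (_ | v) j hij hne
    · exact hf.apex.symm
    · refine if_neg fun hv => hne ?_
      cases j with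
      | none => rw [hv.1, hf.apex]
      | some u => rw [hv.1, hv.2 u hij.symm]
  have hstar : ∀ v, f' (some v) = 0 → ∃ u, H.Adj u v ∧ f' (some u) ≠ 0 := by
    intro v hv
    have hfv : f (some v) = 0 := by have := hraise (some v); omega
    have hnot : ¬Lonely v := fun hl => by simp [f', hl] at hv
    obtain ⟨u, huv, hu⟩ : ∃ u, H.Adj u v ∧ f (some u) ≠ 0 := by
      by_contra! h
      exact hnot ⟨hfv, h⟩
    refine ⟨u, huv, fun hu' => hu ?_⟩
    have := hraise (some u)
    omega
  have hne_zero : ∃ v, f' (some v) ≠ 0 := by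
    obtain ⟨v⟩ := ‹Nonempty W›
    by_cases hv : f' (some v) = 0
    · obtain ⟨u, -, hu⟩ := hstar v hv
      exact ⟨u, hu⟩
    · exact ⟨v, hv⟩
  refine ⟨f', ⟨⟨rfl, fun i j hij => ?_⟩, hstar, hne_zero⟩, fun i j hij h => ?_⟩
  · by_cases hne : f i = f j
    · have := hraise i
      have := hraise j
      omega
    · rw [hkeep i j hij hne, hkeep j i hij.symm (Ne.symm hne)]
      exact hf.sub_le_one hij
  · rw [hkeep i j hij (by omega), hkeep j i hij.symm (by omega), h]

end SuspensionFacets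

section NormalFaces

variable {W : Type*} [DecidableEq W] {H : SimpleGraph W} {f : Option W → ℤ}

theorem IsFacetNormal.apply_single_eq (hf : IsFacetNormal H f) {g : StrongDual ℝ (Option W → ℝ)}
    {M : ℝ} (hg : ∀ i j, (suspension H).Adj i j → f i - f j = 1 →
      g (Pi.single i 1) - g (Pi.single j 1) = M) (i : Option W) :
    g (Pi.single i 1) = M * f i + g (Pi.single none 1) := by
  rcases i with _ | v
  · simp [hf.apex]
  have := hf.neg_one_le (some v)
  have := hf.le_one (some v)
  rcases (by omega : f (some v) = 1 ∨ f (some v) = 0 ∨ f (some v) = -1) with h | h | h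
  · have := hg (some v) none trivial (by rw [h, hf.apex]; rfl)
    rw [h, Int.cast_one]
    linarith
  · obtain ⟨u, huv, hu⟩ := hf.exists_adj_ne_zero v h
    have := hf.neg_one_le (some u)
    have := hf.le_one (some u)
    rcases (by omega : f (some u) = 1 ∨ f (some u) = -1) with h' | h'
    · have := hg (some u) (some v) huv (by rw [h, h']; rfl)
      have := hg (some u) none trivial (by rw [h', hf.apex]; rfl)
      rw [h, Int.cast_zero]
      linarith
    · have := hg (some v) (some u) huv.symm (by rw [h, h']; rfl)
      have := hg none (some u) trivial (by rw [h', hf.apex]; rfl)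
      rw [h, Int.cast_zero]
      linarith
  · have := hg none (some v) trivial (by rw [h, hf.apex]; rfl)
    rw [h, Int.cast_neg, Int.cast_one]
    linarith

variable [Fintype W]

noncomputable def normalFace (H : SimpleGraph W) (f : Option W → ℤ) : Set (Option W → ℝ) :=
  (dotCLM fun i => (f i : ℝ)).toExposed (symEdgePolytope (suspension H))

theorem dotCLM_intCast_single_sub_single (f : Option W → ℤ) (i j : Option W) :
    dotCLM (fun i => (f i : ℝ)) (Pi.single i 1 - Pi.single j 1) = ((f i - f j : ℤ) : ℝ) := by
  rw [dotCLM_single_sub_single, Int.cast_sub]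

theorem IsSupportingNormal.dotCLM_le_one (hf : IsSupportingNormal H f) {x : Option W → ℝ}
    (hx : x ∈ symEdgePolytope (suspension H)) : dotCLM (fun i => (f i : ℝ)) x ≤ 1 := by
  refine apply_le_of_mem_symEdgePolytope (fun i j hij => ?_) hx
  rw [dotCLM_intCast_single_sub_single]
  exact_mod_cast hf.sub_le_one hij

theorem IsFacetNormal.single_sub_single_mem_normalFace_iff (hf : IsFacetNormal H f) {i j : Option W}
    (hij : (suspension H).Adj i j) :
    Pi.single i 1 - Pi.single j 1 ∈ normalFace H f ↔ f i - f j = 1 := by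
  obtain ⟨i₀, j₀, hij₀, htight⟩ := hf.exists_adj_sub_eq_one
  rw [normalFace, ContinuousLinearMap.toExposed_eq_of_le (fun _ => hf.dotCLM_le_one)
    (single_sub_single_mem_symEdgePolytope hij₀)
    (by rw [dotCLM_intCast_single_sub_single, htight, Int.cast_one])]
  simp only [Set.mem_sep_iff, single_sub_single_mem_symEdgePolytope hij, true_and,
    dotCLM_intCast_single_sub_single]
  exact_mod_cast Iff.rfl

theorem IsFacetNormal.normalFace_nonempty (hf : IsFacetNormal H f) : (normalFace H f).Nonempty := by
  obtain ⟨i, j, hij, htight⟩ := hf.exists_adj_sub_eq_one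
  exact ⟨_, (hf.single_sub_single_mem_normalFace_iff hij).2 htight⟩

theorem IsFacetNormal.normalFace_ne (hf : IsFacetNormal H f) :
    normalFace H f ≠ symEdgePolytope (suspension H) := by
  obtain ⟨i, j, hij, htight⟩ := hf.exists_adj_sub_eq_one
  intro heq
  have hmem := heq ▸ single_sub_single_mem_symEdgePolytope hij.symm
  rw [hf.single_sub_single_mem_normalFace_iff hij.symm] at hmem
  omega

theorem IsFacetNormal.eq_normalFace_of_subset (hf : IsFacetNormal H f) {F : Set (Option W → ℝ)}
    (hF : IsExposed ℝ (symEdgePolytope (suspension H)) F) (hne : F ≠ symEdgePolytope (suspension H))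
    (hsub : normalFace H f ⊆ F) : F = normalFace H f := by
  obtain ⟨x₀, hx₀⟩ := hf.normalFace_nonempty
  obtain ⟨g, rfl⟩ := hF ⟨x₀, hsub hx₀⟩
  have hM : 0 < g x₀ := g.pos_of_mem_toExposed (fun _ => neg_mem_symEdgePolytope) (hsub hx₀) hne
  refine toExposed_symEdgePolytope_eq_of_apply_single hM
    (hf.apply_single_eq fun i j hij htight => ?_)
  rw [← map_sub]
  exact g.apply_eq_of_mem_toExposed (hsub ((hf.single_sub_single_mem_normalFace_iff hij).2 htight))
    (hsub hx₀)

theorem IsFacetNormal.isFacet_normalFace (hf : IsFacetNormal H f) :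
    IsFacet (symEdgePolytope (suspension H)) (normalFace H f) :=
  ⟨ContinuousLinearMap.toExposed.isExposed, hf.normalFace_ne,
    fun _ hF hne hsub => hf.eq_normalFace_of_subset hF hne hsub⟩

end NormalFaces

section FacetClassification

variable {W : Type*} [DecidableEq W] {H : SimpleGraph W}

theorem exists_isSupportingNormal_of_le (g : StrongDual ℝ (Option W → ℝ)) {M : ℝ} (hM : 0 < M)
    (hle : ∀ i j, (suspension H).Adj i j → g (Pi.single i 1 - Pi.single j 1) ≤ M) :
    ∃ f, IsSupportingNormal H f ∧ ∀ i j, (suspension H).Adj i j →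
      g (Pi.single i 1 - Pi.single j 1) = M → f i - f j = 1 := by
  let q (i : Option W) : ℝ := g (Pi.single i 1) / M
  have hq (i j : Option W) : q i = q j + g (Pi.single i 1 - Pi.single j 1) / M := by
    simp only [q, map_sub]
    ring
  refine ⟨fun i => ⌈q i⌉ - ⌈q none⌉, ⟨sub_self _, fun i j hij => ?_⟩, fun i j _ h => ?_⟩
  · have hle' : q i ≤ q j + 1 := by
      rw [hq i j]
      gcongr
      exact (div_le_one hM).2 (hle i j hij)
    have := Int.ceil_add_one (q j) ▸ Int.ceil_mono hle'
    omega
  · have hshift : q i = q j + 1 := by rw [hq i j, h, div_self hM.ne']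
    have := Int.ceil_add_one (q j) ▸ congrArg Int.ceil hshift
    dsimp only
    omega

theorem nonempty_of_isFacet {F : Set (Option W → ℝ)}
    (hF : IsFacet (symEdgePolytope (suspension H)) F) : Nonempty W := by
  have hP : (symEdgePolytope (suspension H)).Nonempty := by
    by_contra! hempty
    exact hF.2.1 ((Set.subset_empty_iff.1 (hempty ▸ hF.1.subset)).trans hempty.symm)
  rw [symEdgePolytope_eq_convexHull, convexHull_nonempty_iff] at hP
  obtain ⟨_, _ | v, _ | w, hij, -⟩ := hP
  exacts [hij.elim, ⟨w⟩, ⟨v⟩, ⟨v⟩]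

variable [Fintype W]

theorem subset_normalFace_of_tight {F : Set (Option W → ℝ)} {f : Option W → ℤ}
    (hF : IsExposed ℝ (symEdgePolytope (suspension H)) F) (hf : IsFacetNormal H f)
    (htight : ∀ i j, (suspension H).Adj i j → Pi.single i 1 - Pi.single j 1 ∈ F → f i - f j = 1) :
    F ⊆ normalFace H f := by
  rw [symEdgePolytope_eq_convexHull] at hF
  rw [hF.eq_convexHull_inter (edgeVectors_finite _)]
  refine convexHull_min ?_ (ContinuousLinearMap.toExposed.isExposed.convex ?_)
  · rintro _ ⟨⟨i, j, hij, rfl⟩, hx⟩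
    exact (hf.single_sub_single_mem_normalFace_iff hij).2 (htight i j hij hx)
  · rw [symEdgePolytope_eq_convexHull]
    exact convex_convexHull ℝ _

theorem IsFacet.exists_isFacetNormal {F : Set (Option W → ℝ)}
    (hF : IsFacet (symEdgePolytope (suspension H)) F) :
    ∃ f, IsFacetNormal H f ∧ F = normalFace H f := by
  have := nonempty_of_isFacet hF
  obtain ⟨hexp, hne, hmax⟩ := hF
  have hF_nonempty : F.Nonempty := by
    by_contra! hempty
    have hf₁ := isFacetNormal_const_one (H := H)
    have := hmax _ ContinuousLinearMap.toExposed.isExposed hf₁.normalFace_ne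
      (hempty ▸ Set.empty_subset _)
    exact hf₁.normalFace_nonempty.ne_empty (this.trans hempty)
  obtain ⟨x₀, hx₀⟩ := hF_nonempty
  obtain ⟨g, rfl⟩ := hexp ⟨x₀, hx₀⟩
  have hM : 0 < g x₀ := g.pos_of_mem_toExposed (fun _ => neg_mem_symEdgePolytope) hx₀ hne
  obtain ⟨f, hf, hf_tight⟩ := exists_isSupportingNormal_of_le g hM
    fun i j hij => hx₀.2 _ (single_sub_single_mem_symEdgePolytope hij)
  obtain ⟨f', hf', hf'_tight⟩ := hf.exists_isFacetNormal
  refine ⟨f', hf', (hmax _ ContinuousLinearMap.toExposed.isExposed hf'.normalFace_ne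
    (subset_normalFace_of_tight hexp hf' fun i j hij hmem => ?_)).symm⟩
  exact hf'_tight i j hij (hf_tight i j hij (g.apply_eq_of_mem_toExposed hmem hx₀))

theorem normalFace_injOn : Set.InjOn (normalFace H) {f | IsFacetNormal H f} := by
  intro f hf f' hf' heq
  funext i
  rcases i with _ | v
  · rw [hf.apex, hf'.apex]
  have hadj : (suspension H).Adj (some v) none := trivial
  have hpos := (hf.single_sub_single_mem_normalFace_iff hadj).symm.trans
    (heq ▸ hf'.single_sub_single_mem_normalFace_iff hadj)
  have hneg := (hf.single_sub_single_mem_normalFace_iff hadj.symm).symm.trans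
    (heq ▸ hf'.single_sub_single_mem_normalFace_iff hadj.symm)
  have := hf.neg_one_le (some v)
  have := hf.le_one (some v)
  have := hf'.neg_one_le (some v)
  have := hf'.le_one (some v)
  rw [hf.apex, hf'.apex] at hpos hneg
  omega

theorem numFacets_symEdgePolytope_suspension (H : SimpleGraph W) :
    numFacets (symEdgePolytope (suspension H)) = {f : Option W → ℤ | IsFacetNormal H f}.ncard := by
  have hfacets : {F | IsFacet (symEdgePolytope (suspension H)) F} =
      normalFace H '' {f | IsFacetNormal H f} := by
    ext F
    constructor
    · intro hF
      obtain ⟨f, hf, rfl⟩ := hF.exists_isFacetNormal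
      exact ⟨f, hf, rfl⟩
    · rintro ⟨f, hf, rfl⟩
      exact hf.isFacet_normalFace
  rw [numFacets, hfacets, normalFace_injOn.ncard_image]

end FacetClassification

section LiftApex

variable {W : Type*}

def liftApex (f : W → ℤ) : Option W → ℤ := fun i => i.elim 0 f

theorem liftApex_injective : Function.Injective (liftApex (W := W)) :=
  fun _ _ h => funext fun i => congrFun h (some i)

theorem image_liftApex_setOf_isFacetNormal (H : SimpleGraph W) :
    liftApex '' {f | IsFacetNormal H (liftApex f)} = {f | IsFacetNormal H f} := by
  ext f
  constructor
  · rintro ⟨f, hf, rfl⟩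
    exact hf
  · intro hf
    have hlift : liftApex (fun i => f (some i)) = f := by
      funext i
      rcases i with _ | i
      exacts [hf.apex.symm, rfl]
    exact ⟨_, hlift ▸ hf, hlift⟩

end LiftApex

section DoubleSuspension

variable {V : Type*} {G : SimpleGraph V} {f : Option V → ℤ}

def signPattern (c : ℤ) (s : V → Bool) : Option V → ℤ :=
  fun i => i.elim c fun v => if s v then c else 0

theorem signPattern_injective {c : ℤ} (hc : c ≠ 0) :
    Function.Injective (signPattern (V := V) c) := by
  intro s t h
  funext v
  have := congrFun h (some v)
  cases hs : s v <;> cases ht : t v <;> simp_all [signPattern]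

theorem range_signPattern (c : ℤ) :
    Set.range (signPattern (V := V) c) =
      {f | f none = c ∧ ∀ v, f (some v) = 0 ∨ f (some v) = c} := by
  classical
  ext f
  constructor
  · rintro ⟨s, rfl⟩
    refine ⟨rfl, fun v => ?_⟩
    cases hs : s v <;> simp [signPattern, hs]
  · rintro ⟨hnone, hsome⟩
    refine ⟨fun v => decide (f (some v) = c), funext fun i => ?_⟩
    rcases i with _ | v
    · exact hnone.symm
    · have := hsome v
      by_cases hv : f (some v) = c
      · simp [signPattern, hv]
      · simp [signPattern, hv]
        omega

theorem ncard_range_signPattern [Finite V] {c : ℤ} (hc : c ≠ 0) :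
    (Set.range (signPattern (V := V) c)).ncard = 2 ^ Nat.card V := by
  rw [Set.ncard_range_of_injective (signPattern_injective hc), Nat.card_fun,
    Nat.card_eq_fintype_card (α := Bool), Fintype.card_bool]

theorem isFacetNormal_suspension_liftApex (hf : IsFacetNormal G f) :
    IsFacetNormal (suspension G) (liftApex f) where
  apex := rfl
  sub_le_one := by
    rintro (_ | i) (_ | j) hij
    · exact hij.elim
    · have := hf.neg_one_le j
      show 0 - f j ≤ 1
      omega
    · have := hf.le_one i
      show f i - 0 ≤ 1
      omega
    · exact hf.sub_le_one hij
  exists_adj_ne_zero := by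
    rintro (_ | v) hv
    · obtain ⟨v, hv⟩ := hf.exists_ne_zero
      exact ⟨some v, trivial, hv⟩
    · obtain ⟨u, huv, hu⟩ := hf.exists_adj_ne_zero v hv
      exact ⟨some u, huv, hu⟩
  exists_ne_zero :=
    let ⟨v, hv⟩ := hf.exists_ne_zero
    ⟨some v, hv⟩

theorem IsFacetNormal.of_liftApex (hf : IsFacetNormal (suspension G) (liftApex f))
    (hnone : f none = 0) : IsFacetNormal G f where
  apex := hnone
  sub_le_one i j hij := hf.sub_le_one (i := some i) (j := some j) hij
  exists_adj_ne_zero v hv := by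
    obtain ⟨_ | u, huv, hu⟩ := hf.exists_adj_ne_zero (some v) hv
    · exact absurd hnone hu
    · exact ⟨u, huv, hu⟩
  exists_ne_zero := by
    obtain ⟨_ | v, hv, hu⟩ := hf.exists_adj_ne_zero none hnone
    · exact hv.elim
    · exact ⟨v, hu⟩

theorem isFacetNormal_suspension_liftApex_of_forall {c : ℤ} (hc : c = 1 ∨ c = -1)
    (hnone : f none = c) (hsome : ∀ v, f (some v) = 0 ∨ f (some v) = c) :
    IsFacetNormal (suspension G) (liftApex f) where
  apex := rfl
  sub_le_one i j _ := by
    have hvalues : ∀ i, liftApex f i = 0 ∨ liftApex f i = c := by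
      rintro (_ | _ | v)
      · exact Or.inl rfl
      · exact Or.inr hnone
      · exact hsome v
    have := hvalues i
    have := hvalues j
    omega
  exists_adj_ne_zero := by
    rintro (_ | v) hv
    · exact absurd (show f none = 0 from hv) (by omega)
    · exact ⟨none, trivial, by show f none ≠ 0; omega⟩
  exists_ne_zero := ⟨none, by show f none ≠ 0; omega⟩

theorem IsFacetNormal.forall_of_liftApex (hf : IsFacetNormal (suspension G) (liftApex f))
    (hnone : f none ≠ 0) (v : V) : f (some v) = 0 ∨ f (some v) = f none := by
  have : -1 ≤ f (some v) := hf.neg_one_le (some (some v))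
  have : f (some v) ≤ 1 := hf.le_one (some (some v))
  have : -1 ≤ f none := hf.neg_one_le (some none)
  have : f none ≤ 1 := hf.le_one (some none)
  have : f none - f (some v) ≤ 1 := hf.sub_le_one (i := some none) (j := some (some v)) trivial
  have : f (some v) - f none ≤ 1 := hf.sub_le_one (i := some (some v)) (j := some none) trivial
  omega

theorem setOf_isFacetNormal_suspension_liftApex :
    {f | IsFacetNormal (suspension G) (liftApex f)} =
      {f | IsFacetNormal G f} ∪ (Set.range (signPattern 1) ∪ Set.range (signPattern (-1))) := by
  ext f
  simp only [Set.mem_union, range_signPattern, Set.mem_ofPred_eq]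
  constructor
  · intro hf
    by_cases hnone : f none = 0
    · exact Or.inl (hf.of_liftApex hnone)
    · have hsome := hf.forall_of_liftApex hnone
      have : -1 ≤ f none := hf.neg_one_le (some none)
      have : f none ≤ 1 := hf.le_one (some none)
      rcases (by omega : f none = 1 ∨ f none = -1) with h | h
      · exact Or.inr (Or.inl ⟨h, h ▸ hsome⟩)
      · exact Or.inr (Or.inr ⟨h, h ▸ hsome⟩)
  · rintro (hf | ⟨hnone, hsome⟩ | ⟨hnone, hsome⟩)
    · exact isFacetNormal_suspension_liftApex hf
    · exact isFacetNormal_suspension_liftApex_of_forall (Or.inl rfl) hnone hsome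
    · exact isFacetNormal_suspension_liftApex_of_forall (Or.inr rfl) hnone hsome

theorem ncard_setOf_isFacetNormal_suspension [Fintype V] (G : SimpleGraph V) :
    {f : Option (Option V) → ℤ | IsFacetNormal (suspension G) f}.ncard =
      {f | IsFacetNormal G f}.ncard + 2 ^ (Fintype.card V + 1) := by
  have hdisjoint_signs :
      Disjoint (Set.range (signPattern (V := V) 1)) (Set.range (signPattern (-1))) :=
    Set.disjoint_left.2 fun _ ⟨s, hs⟩ ⟨t, ht⟩ => by
      have := congrFun (hs.trans ht.symm) none
      simp [signPattern] at this
  have hdisjoint : Disjoint {f | IsFacetNormal G f}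
      (Set.range (signPattern (V := V) 1) ∪ Set.range (signPattern (-1))) :=
    Set.disjoint_left.2 fun f hf hsign => by
      rcases hsign with ⟨s, rfl⟩ | ⟨s, rfl⟩ <;> exact absurd hf.apex (by simp [signPattern])
  rw [← image_liftApex_setOf_isFacetNormal, Set.ncard_image_of_injective _ liftApex_injective,
    setOf_isFacetNormal_suspension_liftApex,
    Set.ncard_union_eq hdisjoint (setOf_isFacetNormal_finite G), Set.ncard_union_eq hdisjoint_signs,
    ncard_range_signPattern one_ne_zero, ncard_range_signPattern (by norm_num),
    Nat.card_eq_fintype_card, pow_succ]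
  ring

end DoubleSuspension

theorem numFacets_double_suspension_general {V : Type*} [Fintype V] [DecidableEq V]
    (G : SimpleGraph V) :
    numFacets (symEdgePolytope (suspension (suspension G))) =
      numFacets (symEdgePolytope (suspension G)) + 2 ^ (Fintype.card V + 1) := by
  rw [numFacets_symEdgePolytope_suspension, numFacets_symEdgePolytope_suspension]
  exact ncard_setOf_isFacetNormal_suspension G

/-- Let `G` be a graph with `n - 1 ≥ 2` vertices. Then
`N(P_{(Ĝ)^}) = N(P_Ĝ) + 2^n`. -/
theorem numFacets_double_suspension {V : Type*} [Fintype V] [DecidableEq V]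
    (G : SimpleGraph V) (hV : 2 ≤ Fintype.card V) :
    numFacets (symEdgePolytope (suspension (suspension G))) =
      numFacets (symEdgePolytope (suspension G)) + 2 ^ (Fintype.card V + 1) :=
  numFacets_double_suspension_general G
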